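/- Let S be a numerical semigroup and let I, I' be proper maximum sparse ideals of S. If I ⊆ I', then #(S \ I) ≥ #(S \ I') and the difference #(S \ I) - #(S \ I') belongs to S. -/

import Mathlib

/-- `S` is a numerical semigroup: it contains `0`, is closed under addition,
and has finite complement in `ℕ`. -/
def IsNumericalSemigroup (S : Set ℕ) : Prop :=
  0 ∈ S ∧ (∀ a ∈ S, ∀ b ∈ S, a + b ∈ S) ∧ Sᶜ.Finite

/-- The genus of `S`: the number of gaps, i.e. of elements of `ℕ \ S`. -/
noncomputable def genus (S : Set ℕ) : ℕ := Sᶜ.ncard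

/-- The numConductor of `S`: the smallest integer `c` such that every integer `≥ c`
belongs to `S`. -/
noncomputable def numConductor (S : Set ℕ) : ℕ := sInf {c : ℕ | ∀ m, c ≤ m → m ∈ S}

/-- `I` is an ideal of `S`: a nonempty subset of `S` with `I + S ⊆ I`. -/
def IsIdeal (S I : Set ℕ) : Prop :=
  I.Nonempty ∧ I ⊆ S ∧ ∀ i ∈ I, ∀ s ∈ S, i + s ∈ I

/-- The Frobenius number of an ideal `I`: the largest integer not belonging to `I`. -/
noncomputable def frobeniusNumber (I : Set ℕ) : ℕ := sSup Iᶜ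

/-- `I` is a maximum sparse ideal of `S`: its Frobenius number equals
`2g - 1 + #(S \ I)` where `g` is the genus of `S`. -/
def IsMaxSparse (S I : Set ℕ) : Prop :=
  (frobeniusNumber I : ℤ) = 2 * (genus S : ℤ) - 1 + ((S \ I).ncard : ℤ)

/-- The leader of a proper ideal `I` of `S`: the largest element of `S \ I`. -/
noncomputable def leader (S I : Set ℕ) : ℕ := sSup (S \ I)

/-!
For a maximum sparse ideal `I` with Frobenius number `F`, every `x ∈ [0, F]` lies in `Iᶜ` or
satisfies `F - x ∉ S` (otherwise `F = x + (F - x) ∈ I`). There are `g + #(S \ I)` of the first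
kind and at most `g` of the second, while `[0, F]` has exactly `2g + #(S \ I)` elements; so no
`x` is of both kinds, i.e. `F - x ∈ S` for every `x ∉ I`. For `I ⊆ I'` apply this to
`x = F(I')`: the defining equations give `F(I) - F(I') = #(S \ I) - #(S \ I')`.
-/

variable {S I : Set ℕ}

lemma IsIdeal.finite_compl (hI : IsIdeal S I) (hS : Sᶜ.Finite) : Iᶜ.Finite := by
  obtain ⟨⟨i₀, hi₀⟩, -, hadd⟩ := hI
  refine ((Set.finite_Iio i₀).union (hS.image (i₀ + ·))).subset fun n hn => ?_
  by_cases h : n < i₀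
  · exact Or.inl h
  · refine Or.inr ⟨n - i₀, fun hs => hn ?_, show i₀ + (n - i₀) = n by omega⟩
    simpa [Nat.add_sub_cancel' (not_lt.1 h)] using hadd i₀ hi₀ (n - i₀) hs

lemma ncard_compl_eq_genus_add (hIS : I ⊆ S) (hI : Iᶜ.Finite) :
    Iᶜ.ncard = genus S + (S \ I).ncard := by
  rw [genus, ← Set.ncard_sdiff_add_ncard_of_subset (Set.compl_subset_compl.2 hIS) hI,
    compl_sdiff_compl, add_comm]

-- `2g - 1` is odd, so it cannot be the junk value `sSup ∅ = 0`.
lemma IsMaxSparse.compl_nonempty (h : IsMaxSparse S I) : Iᶜ.Nonempty := by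
  by_contra hempty
  rw [Set.not_nonempty_iff_eq_empty, Set.compl_empty_iff] at hempty
  simp only [IsMaxSparse, frobeniusNumber, hempty, Set.compl_univ, Set.sdiff_univ,
    Set.ncard_empty, csSup_empty, Nat.bot_eq_zero] at h
  omega

lemma le_frobeniusNumber (hI : Iᶜ.Finite) {x : ℕ} (hx : x ∉ I) : x ≤ frobeniusNumber I :=
  le_csSup hI.bddAbove hx

lemma frobeniusNumber_notMem (hne : Iᶜ.Nonempty) (hI : Iᶜ.Finite) : frobeniusNumber I ∉ I :=
  Nat.sSup_mem hne hI.bddAbove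

lemma ncard_setOf_sub_notMem_le_genus (hS : Sᶜ.Finite) (n : ℕ) :
    {x | x ≤ n ∧ n - x ∉ S}.ncard ≤ genus S := by
  have hinj : Set.InjOn (n - ·) {x | x ≤ n ∧ n - x ∉ S} := fun x hx y hy hxy => by
    have := hx.1
    have := hy.1
    simp only at hxy
    omega
  rw [← hinj.ncard_image]
  exact Set.ncard_le_ncard (by rintro _ ⟨x, hx, rfl⟩; exact hx.2) hS

lemma IsIdeal.Iic_subset_compl_union (hI : IsIdeal S I) {n : ℕ} (hn : n ∉ I) :
    Set.Iic n ⊆ Iᶜ ∪ {x | x ≤ n ∧ n - x ∉ S} := fun x hx => by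
  by_cases hxI : x ∈ I
  · refine Or.inr ⟨hx, fun hs => hn ?_⟩
    simpa [Nat.add_sub_cancel' (Set.mem_Iic.1 hx)] using hI.2.2 x hxI (n - x) hs
  · exact Or.inl hxI

theorem IsMaxSparse.frobeniusNumber_sub_mem (hms : IsMaxSparse S I) (hI : IsIdeal S I)
    (hS : Sᶜ.Finite) {x : ℕ} (hx : x ∉ I) : frobeniusNumber I - x ∈ S := by
  have hIc := hI.finite_compl hS
  have hFI : frobeniusNumber I ∉ I := frobeniusNumber_notMem hms.compl_nonempty hIc
  unfold IsMaxSparse at hms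
  set F := frobeniusNumber I
  set B := {x | x ≤ F ∧ F - x ∉ S}
  have hB : B.Finite := (Set.finite_Iic F).subset fun x hx => hx.1
  have hcover : F + 1 ≤ (Iᶜ ∪ B).ncard := by
    rw [← Nat.card_Iic, ← Set.ncard_coe_finset, Finset.coe_Iic]
    exact Set.ncard_le_ncard (hI.Iic_subset_compl_union hFI) (hIc.union hB)
  have hinter : (Iᶜ ∩ B).ncard = 0 := by
    have := Set.ncard_union_add_ncard_inter Iᶜ B hIc hB
    have := ncard_compl_eq_genus_add hI.2.1 hIc
    have : B.ncard ≤ genus S := ncard_setOf_sub_notMem_le_genus hS F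
    omega
  by_contra hFx
  have hxB : x ∈ Iᶜ ∩ B := ⟨hx, le_frobeniusNumber hIc hx, hFx⟩
  rw [(Set.ncard_eq_zero (hIc.subset Set.inter_subset_left)).1 hinter] at hxB
  exact hxB

theorem card_diff_sub_card_diff_mem_general (S I I' : Set ℕ)
    (hS : IsNumericalSemigroup S)
    (hI : IsIdeal S I) (hmsI : IsMaxSparse S I)
    (hmsI' : IsMaxSparse S I')
    (hsub : I ⊆ I') :
    (S \ I').ncard ≤ (S \ I).ncard ∧ (S \ I).ncard - (S \ I').ncard ∈ S := by
  have hIc := hI.finite_compl hS.2.2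
  have hF' : frobeniusNumber I' ∉ I := fun h => frobeniusNumber_notMem hmsI'.compl_nonempty
    (hIc.subset (Set.compl_subset_compl.2 hsub)) (hsub h)
  have hle := le_frobeniusNumber hIc hF'
  have hdiff : (S \ I).ncard - (S \ I').ncard = frobeniusNumber I - frobeniusNumber I' := by
    unfold IsMaxSparse at hmsI hmsI'
    omega
  refine ⟨by unfold IsMaxSparse at hmsI hmsI'; omega, ?_⟩
  rw [hdiff]
  exact hmsI.frobeniusNumber_sub_mem hI hS.2.2 hF'

/-- If `I ⊆ I'` are proper maximum sparse ideals, then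
`#(S \ I') ≤ #(S \ I)` and `#(S \ I) - #(S \ I') ∈ S`. -/
theorem card_diff_sub_card_diff_mem (S I I' : Set ℕ)
    (hS : IsNumericalSemigroup S)
    (hI : IsIdeal S I) (hproperI : I ≠ S) (hmsI : IsMaxSparse S I)
    (hI' : IsIdeal S I') (hproperI' : I' ≠ S) (hmsI' : IsMaxSparse S I')
    (hsub : I ⊆ I') :
    (S \ I').ncard ≤ (S \ I).ncard ∧ (S \ I).ncard - (S \ I').ncard ∈ S :=
  card_diff_sub_card_diff_mem_general S I I' hS hI hmsI hmsI' hsub
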